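/- arXiv:2311.10046 — 8 statements merged into one kernel-verified Lean document; each statement's English description precedes it below -/
import Mathlib

section
/- Let O = (1 1; 0 1) and I = (1 0; 1 1) be 2×2 matrices. For any finite words u, v over {O, I} of the same length n, if u ≠ v as words and neither is obtained from the other by the relation described below, then the interiors of the cones (product of u)·ℝ₊² and (product of v)·ℝ₊² are disjoint. Specifically: u·ℝ₊² ∩ v·ℝ₊² ≠ {0} if and only if either u = v, or there exists a common prefix w and a tail such that after the first position where they differ (one has O, the other I), the word with O continues with all I's and the word with I continues with all O's. -/
/-!
A word's cone is its first letter applied to the cone of the rest, and the letters are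
invertible, so a common prefix can be stripped. The cones of `O` and `I` are
`{0 ≤ x₁ ≤ x₀}` and `{0 ≤ x₀ ≤ x₁}`, which meet only along the ray of
`(1, 1) = O (0, 1) = I (1, 0)`. So when the first letters differ (`O` in `u`, `I` in `v`), the
cones meet outside `0` iff `(0, 1)` lies in the cone of the rest of `u` and `(1, 0)` in the cone
of the rest of `v`. As every cone lies in the quadrant, `(0, 1)` can only be the image of a
nonnegative vector under the letter fixing it, `I`, so it lies in the cone of a word iff the word
is all `I`s; dually for `(1, 0)`.
-/

open Matrix

/-- The letter `false` stands for `O = !![1,1;0,1]`, the letter `true`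
stands for `I = !![1,0;1,1]`. -/
noncomputable def letterMat : Bool → Matrix (Fin 2) (Fin 2) ℝ
  | false => !![1, 1; 0, 1]
  | true  => !![1, 0; 1, 1]

/-- The matrix product of the letters of a word. -/
noncomputable def wordProd (u : List Bool) : Matrix (Fin 2) (Fin 2) ℝ :=
  (u.map letterMat).prod

/-- The cone `m · ℝ₊²`. -/
def matCone (m : Matrix (Fin 2) (Fin 2) ℝ) : Set (Fin 2 → ℝ) :=
  {y | ∃ v : Fin 2 → ℝ, (∀ i, 0 ≤ v i) ∧ y = m.mulVec v}

lemma wordProd_cons (a : Bool) (u : List Bool) :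
    wordProd (a :: u) = letterMat a * wordProd u :=
  List.prod_cons

lemma letterMat_false_mulVec (y : Fin 2 → ℝ) : letterMat false *ᵥ y = ![y 0 + y 1, y 1] := by
  ext i; fin_cases i <;> simp [letterMat, mulVec, dotProduct, Fin.sum_univ_two]

lemma letterMat_true_mulVec (y : Fin 2 → ℝ) : letterMat true *ᵥ y = ![y 0, y 0 + y 1] := by
  ext i; fin_cases i <;> simp [letterMat, mulVec, dotProduct, Fin.sum_univ_two]

lemma letterMat_mulVec_injective (a : Bool) : Function.Injective (letterMat a).mulVec := by
  refine mulVec_injective_iff_isUnit.mpr ((isUnit_iff_isUnit_det _).mpr ?_)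
  cases a <;> simp [letterMat, det_fin_two]

lemma letterMat_mulVec_nonneg (a : Bool) {y : Fin 2 → ℝ} (hy : 0 ≤ y) :
    0 ≤ letterMat a *ᵥ y := by
  have h0 : 0 ≤ y 0 := hy 0
  have h1 : 0 ≤ y 1 := hy 1
  cases a <;> simp only [letterMat_false_mulVec, letterMat_true_mulVec] <;> intro i <;>
    fin_cases i <;> simp <;> positivity

lemma matCone_eq_image (M : Matrix (Fin 2) (Fin 2) ℝ) : matCone M = M.mulVec '' Set.Ici 0 := by
  ext x
  simp [matCone, Pi.le_def, eq_comm]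

lemma matCone_mul (M N : Matrix (Fin 2) (Fin 2) ℝ) :
    matCone (M * N) = M.mulVec '' matCone N := by
  simp only [matCone_eq_image, Set.image_image, mulVec_mulVec]

lemma zero_mem_matCone (M : Matrix (Fin 2) (Fin 2) ℝ) : 0 ∈ matCone M := by
  rw [matCone_eq_image]; exact ⟨0, Set.mem_Ici.mpr le_rfl, mulVec_zero M⟩

lemma smul_mem_matCone {M : Matrix (Fin 2) (Fin 2) ℝ} {c : ℝ} (hc : 0 ≤ c)
    {x : Fin 2 → ℝ} (hx : x ∈ matCone M) : c • x ∈ matCone M := by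
  rw [matCone_eq_image] at *
  obtain ⟨y, hy, rfl⟩ := hx
  exact ⟨c • y, smul_nonneg hc (Set.mem_Ici.mp hy), mulVec_smul M c y⟩

lemma matCone_wordProd_cons (a : Bool) (u : List Bool) :
    matCone (wordProd (a :: u)) = (letterMat a).mulVec '' matCone (wordProd u) := by
  rw [wordProd_cons, matCone_mul]

lemma matCone_wordProd_subset_Ici_zero (u : List Bool) : matCone (wordProd u) ⊆ Set.Ici 0 := by
  induction u with
  | nil => simp [wordProd, matCone_eq_image]
  | cons a u ih =>
    rw [matCone_wordProd_cons]
    rintro _ ⟨y, hy, rfl⟩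
    exact letterMat_mulVec_nonneg a (ih hy)

lemma mem_matCone_wordProd_iff_forall_eq {e : Fin 2 → ℝ} {b : Bool} (he : 0 ≤ e)
    (h_preimage : ∀ a (y : Fin 2 → ℝ), 0 ≤ y →
      (letterMat a *ᵥ y = e ↔ a = b ∧ y = e))
    (u : List Bool) : e ∈ matCone (wordProd u) ↔ ∀ x ∈ u, x = b := by
  induction u with
  | nil => simpa [wordProd, matCone_eq_image] using he
  | cons a u ih =>
    rw [matCone_wordProd_cons, List.forall_mem_cons, ← ih]
    constructor
    · rintro ⟨y, hy, hye⟩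
      obtain ⟨rfl, rfl⟩ := (h_preimage a y (matCone_wordProd_subset_Ici_zero u hy)).mp hye
      exact ⟨rfl, hy⟩
    · rintro ⟨rfl, he_mem⟩
      exact ⟨e, he_mem, (h_preimage _ e he).mpr ⟨rfl, rfl⟩⟩

lemma letterMat_mulVec_eq_e1_iff (a : Bool) {y : Fin 2 → ℝ} (hy : 0 ≤ y) :
    letterMat a *ᵥ y = ![0, 1] ↔ a = true ∧ y = ![0, 1] := by
  have h0 : 0 ≤ y 0 := hy 0
  have h1 : 0 ≤ y 1 := hy 1
  cases a <;>
    simp only [letterMat_false_mulVec, letterMat_true_mulVec, funext_iff, Fin.forall_fin_two,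
      cons_val_zero, cons_val_one, cons_val_fin_one] <;>
    grind

lemma letterMat_mulVec_eq_e0_iff (a : Bool) {y : Fin 2 → ℝ} (hy : 0 ≤ y) :
    letterMat a *ᵥ y = ![1, 0] ↔ a = false ∧ y = ![1, 0] := by
  have h0 : 0 ≤ y 0 := hy 0
  have h1 : 0 ≤ y 1 := hy 1
  cases a <;>
    simp only [letterMat_false_mulVec, letterMat_true_mulVec, funext_iff, Fin.forall_fin_two,
      cons_val_zero, cons_val_one, cons_val_fin_one] <;>
    grind

lemma e1_mem_matCone_wordProd_iff (u : List Bool) :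
    ![0, 1] ∈ matCone (wordProd u) ↔ ∀ x ∈ u, x = true :=
  mem_matCone_wordProd_iff_forall_eq (by simp [Pi.le_def, Fin.forall_fin_two])
    letterMat_mulVec_eq_e1_iff u

lemma e0_mem_matCone_wordProd_iff (u : List Bool) :
    ![1, 0] ∈ matCone (wordProd u) ↔ ∀ x ∈ u, x = false :=
  mem_matCone_wordProd_iff_forall_eq (by simp [Pi.le_def, Fin.forall_fin_two])
    letterMat_mulVec_eq_e0_iff u

lemma eq_smul_of_letterMat_true_mulVec_eq_false_mulVec {y z : Fin 2 → ℝ} (hy : 0 ≤ y)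
    (hz : 0 ≤ z) (h : letterMat true *ᵥ z = letterMat false *ᵥ y) :
    y = y 1 • ![0, 1] ∧ z = y 1 • ![1, 0] := by
  have hy0 : 0 ≤ y 0 := hy 0
  have hz1 : 0 ≤ z 1 := hz 1
  simp only [letterMat_false_mulVec, letterMat_true_mulVec, funext_iff, Fin.forall_fin_two,
    cons_val_zero, cons_val_one, cons_val_fin_one, Pi.smul_apply, smul_eq_mul] at h ⊢
  grind

lemma exists_ne_zero_mem_inter_false_true_iff_forall (u v : List Bool) :
    (∃ x ∈ matCone (wordProd (false :: u)) ∩ matCone (wordProd (true :: v)), x ≠ 0) ↔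
      (∀ x ∈ u, x = true) ∧ ∀ x ∈ v, x = false := by
  rw [← e1_mem_matCone_wordProd_iff, ← e0_mem_matCone_wordProd_iff]
  simp only [matCone_wordProd_cons]
  constructor
  · rintro ⟨_, ⟨⟨y, hy, rfl⟩, ⟨z, hz, hzy⟩⟩, hx⟩
    obtain ⟨hy_eq, hz_eq⟩ := eq_smul_of_letterMat_true_mulVec_eq_false_mulVec
      (matCone_wordProd_subset_Ici_zero u hy) (matCone_wordProd_subset_Ici_zero v hz) hzy
    have ht : 0 < y 1 := by
      refine lt_of_le_of_ne (matCone_wordProd_subset_Ici_zero u hy 1) fun ht => hx ?_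
      rw [hy_eq, ← ht, zero_smul, mulVec_zero]
    refine ⟨?_, ?_⟩
    · rw [← inv_smul_smul₀ ht.ne' ![(0 : ℝ), 1], ← hy_eq]
      exact smul_mem_matCone (inv_nonneg.mpr ht.le) hy
    · rw [← inv_smul_smul₀ ht.ne' ![(1 : ℝ), 0], ← hz_eq]
      exact smul_mem_matCone (inv_nonneg.mpr ht.le) hz
  · rintro ⟨he1, he0⟩
    refine ⟨![1, 1], ⟨⟨_, he1, ?_⟩, ⟨_, he0, ?_⟩⟩, by simp⟩
    · rw [letterMat_false_mulVec]; simp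
    · rw [letterMat_true_mulVec]; simp

def AdjacentWords (u v : List Bool) : Prop :=
  ∃ (w : List Bool) (k : ℕ),
    (u = w ++ false :: List.replicate k true ∧ v = w ++ true :: List.replicate k false) ∨
    (u = w ++ true :: List.replicate k false ∧ v = w ++ false :: List.replicate k true)

lemma AdjacentWords.symm {u v : List Bool} (h : AdjacentWords u v) : AdjacentWords v u := by
  obtain ⟨w, k, h | h⟩ := h
  exacts [⟨w, k, .inr h.symm⟩, ⟨w, k, .inl h.symm⟩]

lemma adjacentWords_comm {u v : List Bool} : AdjacentWords u v ↔ AdjacentWords v u :=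
  ⟨.symm, .symm⟩

lemma adjacentWords_cons_cons_self (a : Bool) (u v : List Bool) :
    AdjacentWords (a :: u) (a :: v) ↔ AdjacentWords u v := by
  constructor
  · rintro ⟨_ | ⟨c, w⟩, k, ⟨hu, hv⟩ | ⟨hu, hv⟩⟩ <;>
      simp only [List.nil_append, List.cons_append, List.cons.injEq] at hu hv
    · exact absurd (hu.1.symm.trans hv.1) (by simp)
    · exact absurd (hu.1.symm.trans hv.1) (by simp)
    · exact ⟨w, k, .inl ⟨hu.2, hv.2⟩⟩
    · exact ⟨w, k, .inr ⟨hu.2, hv.2⟩⟩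
  · rintro ⟨w, k, ⟨hu, hv⟩ | ⟨hu, hv⟩⟩
    exacts [⟨a :: w, k, .inl ⟨by simp [hu], by simp [hv]⟩⟩,
      ⟨a :: w, k, .inr ⟨by simp [hu], by simp [hv]⟩⟩]

lemma adjacentWords_false_true_iff (u v : List Bool) :
    AdjacentWords (false :: u) (true :: v) ↔
      ∃ k, u = List.replicate k true ∧ v = List.replicate k false := by
  constructor
  · rintro ⟨_ | ⟨c, w⟩, k, ⟨hu, hv⟩ | ⟨hu, hv⟩⟩ <;>
      simp only [List.nil_append, List.cons_append, List.cons.injEq] at hu hv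
    · exact ⟨k, hu.2, hv.2⟩
    · simp at hu
    · exact absurd (hu.1.trans hv.1.symm) (by simp)
    · exact absurd (hu.1.trans hv.1.symm) (by simp)
  · rintro ⟨k, rfl, rfl⟩
    exact ⟨[], k, .inl ⟨rfl, rfl⟩⟩

lemma exists_ne_zero_mem_inter_false_true_iff_adjacentWords {u v : List Bool}
    (hlen : u.length = v.length) :
    (∃ x ∈ matCone (wordProd (false :: u)) ∩ matCone (wordProd (true :: v)), x ≠ 0) ↔
      AdjacentWords (false :: u) (true :: v) := by
  rw [exists_ne_zero_mem_inter_false_true_iff_forall, adjacentWords_false_true_iff,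
    ← List.eq_replicate_length, ← List.eq_replicate_length, hlen]
  constructor
  · exact fun h => ⟨_, h⟩
  · rintro ⟨k, rfl, rfl⟩
    simp

lemma exists_ne_zero_mem_inter_iff {u v : List Bool} (hlen : u.length = v.length) :
    (∃ x ∈ matCone (wordProd u) ∩ matCone (wordProd v), x ≠ 0) ↔
      u = v ∨ AdjacentWords u v := by
  induction u generalizing v with
  | nil =>
    obtain rfl := List.eq_nil_of_length_eq_zero hlen.symm
    simp only [Set.inter_self, true_or, iff_true]
    refine ⟨![1, 1], ?_, by simp⟩
    simp [wordProd, matCone_eq_image, Pi.le_def, Fin.forall_fin_two]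
  | cons a u ih =>
    obtain _ | ⟨b, v⟩ := v
    · simp at hlen
    have hlen' : u.length = v.length := by simpa using hlen
    by_cases hab : a = b
    · subst hab
      rw [List.cons_inj_right, adjacentWords_cons_cons_self, ← ih hlen', matCone_wordProd_cons,
        matCone_wordProd_cons, ← Set.image_inter (letterMat_mulVec_injective a),
        Set.exists_mem_image]
      simp only [(letterMat_mulVec_injective a).ne_iff' (mulVec_zero _)]
    · rw [or_iff_right (by simp [hab])]
      obtain rfl := Bool.eq_not.mpr (Ne.symm hab)
      cases a
      · exact exists_ne_zero_mem_inter_false_true_iff_adjacentWords hlen'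
      · rw [Set.inter_comm, adjacentWords_comm]
        exact exists_ne_zero_mem_inter_false_true_iff_adjacentWords hlen'.symm

/-- Two words of the same length over `{O, I}` have cones meeting outside `{0}`
iff they are equal, or they share a prefix and, after the first differing letter,
the word with `O` continues with all `I`'s while the word with `I` continues with
all `O`'s. -/
theorem cones_intersect_iff (n : ℕ) (u v : List Bool)
    (hu : u.length = n) (hv : v.length = n) :
    matCone (wordProd u) ∩ matCone (wordProd v) ≠ {0} ↔
      u = v ∨
      ∃ (w : List Bool) (k : ℕ),
        (u = w ++ false :: List.replicate k true ∧
         v = w ++ true :: List.replicate k false) ∨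
        (u = w ++ true :: List.replicate k false ∧
         v = w ++ false :: List.replicate k true) := by
  have h0 : (0 : Fin 2 → ℝ) ∈ matCone (wordProd u) ∩ matCone (wordProd v) :=
    ⟨zero_mem_matCone _, zero_mem_matCone _⟩
  rw [← Set.nontrivial_iff_ne_singleton h0, Set.nontrivial_iff_exists_ne h0]
  exact exists_ne_zero_mem_inter_iff (hu.trans hv.symm)
end

section
/- Let A be an invertible d×d matrix with nonnegative entries mapping the open positive orthant into itself, and let L_A : Δ → Δ be defined by L_A(y) = Ay/‖Ay‖₁ on the standard simplex Δ = {y ∈ ℝ₊^d : ‖y‖₁ = 1}. Then the Jacobian determinant of L_A at y equals |det A| / ‖Ay‖₁^d. -/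
/-!
Chart the hyperplane `{y | ∑ yᵢ = 1}` affinely by `ℝ^(d-1)`, forgetting the first coordinate.
Pulled back along the chart, `μH[d-1]` is translation invariant and finite on compacts, hence a
multiple of Lebesgue measure, so the classical change of variables formula applies to `L_A` read
in the chart. Its derivative at `y` is the restriction to `{v | ∑ vᵢ = 0}` of
`D = t⁻¹ (1 - L_A(y) ⊗ 𝟙) A`, `t = ∑ (Ay)ᵢ`. The map `C = D + L_A(y) ⊗ 𝟙` preserves `∑ vᵢ` and has
the same restriction, hence the same determinant, and `C = t⁻¹ A (1 + y ⊗ w)` with `w ⬝ y = 0`,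
so this determinant is `det A / t^d`.
-/

open MeasureTheory Matrix Function
open scoped ENNReal NNReal

noncomputable section

namespace LinearMap

variable {K V : Type*} [Field K] [AddCommGroup V] [Module K V] {σ : V →ₗ[K] K} {C : V →ₗ[K] V}

lemma ker_le_comap_ker_of_comp_eq (hC : σ ∘ₗ C = σ) : ker σ ≤ (ker σ).comap C := fun x hx => by
  rw [Submodule.mem_comap, mem_ker, ← comp_apply, hC]
  exact hx

theorem det_eq_det_restrict_ker_of_comp_eq [FiniteDimensional K V] (hC : σ ∘ₗ C = σ) :
    C.det = (C.restrict (ker_le_comap_ker_of_comp_eq hC)).det := by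
  have hquot : (ker σ).mapQ (ker σ) C (ker_le_comap_ker_of_comp_eq hC) = id := by
    refine Submodule.linearMap_qext _ (ext fun x => ?_)
    simp only [comp_apply, Submodule.mkQ_apply, Submodule.mapQ_apply, id_coe, id_eq]
    refine (Submodule.Quotient.eq _).2 ?_
    rw [mem_ker, map_sub, ← comp_apply, hC, sub_self]
  rw [det_eq_det_mul_det (ker σ) C, hquot, det_id, mul_one]

end LinearMap

section NormalizedMulVec

variable {ι : Type*} [Fintype ι] (A : Matrix ι ι ℝ) (s : ι → ℝ)

def normalizedMulVec (y : ι → ℝ) : ι → ℝ := (s ⬝ᵥ A *ᵥ y)⁻¹ • A *ᵥ y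

variable [DecidableEq ι] in
def normalizedMulVecDeriv (y : ι → ℝ) : Matrix ι ι ℝ :=
  (s ⬝ᵥ A *ᵥ y)⁻¹ • ((1 - vecMulVec (normalizedMulVec A s y) s) * A)

variable {A s}

lemma dotProduct_normalizedMulVec {y : ι → ℝ} (hy : s ⬝ᵥ A *ᵥ y ≠ 0) :
    s ⬝ᵥ normalizedMulVec A s y = 1 := by
  rw [normalizedMulVec, dotProduct_smul, smul_eq_mul, inv_mul_cancel₀ hy]

variable [DecidableEq ι]

lemma vecMul_normalizedMulVecDeriv {y : ι → ℝ} (hy : s ⬝ᵥ A *ᵥ y ≠ 0) :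
    s ᵥ* normalizedMulVecDeriv A s y = 0 := by
  rw [normalizedMulVecDeriv, vecMul_smul, ← vecMul_vecMul, vecMul_sub, vecMul_one, vecMul_vecMulVec,
    dotProduct_comm, dotProduct_normalizedMulVec hy, one_smul, sub_self, zero_vecMul, smul_zero]

lemma dotProduct_normalizedMulVecDeriv_add_mulVec {y : ι → ℝ} (hy : s ⬝ᵥ A *ᵥ y ≠ 0)
    (v : ι → ℝ) :
    s ⬝ᵥ (normalizedMulVecDeriv A s y + vecMulVec (normalizedMulVec A s y) s) *ᵥ v = s ⬝ᵥ v := by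
  rw [add_mulVec, dotProduct_add, dotProduct_mulVec, vecMul_normalizedMulVecDeriv hy,
    zero_dotProduct, zero_add, vecMulVec_mulVec, op_smul_eq_smul, dotProduct_smul,
    dotProduct_normalizedMulVec hy, smul_eq_mul, mul_one]

lemma normalizedMulVecDeriv_add_mulVec_of_dotProduct_eq_zero {y v : ι → ℝ} (hv : s ⬝ᵥ v = 0) :
    (normalizedMulVecDeriv A s y + vecMulVec (normalizedMulVec A s y) s) *ᵥ v =
      normalizedMulVecDeriv A s y *ᵥ v := by
  rw [add_mulVec, vecMulVec_mulVec, hv, MulOpposite.op_zero, zero_smul, add_zero]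

theorem hasFDerivAt_normalizedMulVec {y : ι → ℝ} (hy : s ⬝ᵥ A *ᵥ y ≠ 0) :
    HasFDerivAt (normalizedMulVec A s)
      (LinearMap.toContinuousLinearMap (toLin' (normalizedMulVecDeriv A s y))) y := by
  have hAy : HasFDerivAt (A *ᵥ ·) (LinearMap.toContinuousLinearMap A.mulVecLin) y :=
    (LinearMap.toContinuousLinearMap A.mulVecLin).hasFDerivAt
  have hσ := (LinearMap.toContinuousLinearMap (dotProductBilin ℝ ℝ s)).hasFDerivAt.comp y hAy
  have := ((hasDerivAt_inv hy).comp_hasFDerivAt y hσ).smul hAy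
  refine this.congr_fderiv ?_
  ext v i
  simp only [LinearMap.coe_toContinuousLinearMap', Function.comp_apply, dotProductBilin_apply_apply,
    dotProduct_mulVec, neg_smul, _root_.add_apply, _root_.smul_apply, mulVecBilin_apply,
    ContinuousLinearMap.smulRight_apply, _root_.neg_apply, ContinuousLinearMap.comp_apply,
    smul_eq_mul, Pi.add_apply, Pi.smul_apply, Pi.neg_apply, normalizedMulVecDeriv, normalizedMulVec,
    smul_vecMulVec, Matrix.sub_mul, one_mul, Algebra.smul_mul_assoc, vecMulVec_mul, map_smul,
    map_sub, _root_.sub_apply, toLin'_apply, vecMulVec_mulVec, op_smul_eq_smul, Pi.sub_apply]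
  ring

theorem det_normalizedMulVecDeriv_add {y : ι → ℝ} (hy : s ⬝ᵥ y = 1) (ht : s ⬝ᵥ A *ᵥ y ≠ 0) :
    (normalizedMulVecDeriv A s y + vecMulVec (normalizedMulVec A s y) s).det =
      A.det / (s ⬝ᵥ A *ᵥ y) ^ Fintype.card ι := by
  have hfactor : normalizedMulVecDeriv A s y + vecMulVec (normalizedMulVec A s y) s =
      (s ⬝ᵥ A *ᵥ y)⁻¹ • (A * (1 + vecMulVec y (s - (s ⬝ᵥ A *ᵥ y)⁻¹ • s ᵥ* A))) := by
    ext i j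
    simp only [normalizedMulVecDeriv, normalizedMulVec, smul_vecMulVec, Matrix.sub_mul, one_mul,
      Algebra.smul_mul_assoc, vecMulVec_mul, Matrix.add_apply, Matrix.smul_apply, Matrix.sub_apply,
      vecMulVec_apply, smul_eq_mul, Matrix.mul_add, mul_one, mul_vecMulVec, Pi.sub_apply,
      Pi.smul_apply]
    ring
  rw [hfactor, det_smul, det_mul, vecMulVec_eq Unit, det_one_add_replicateCol_mul_replicateRow,
    sub_dotProduct, smul_dotProduct, ← dotProduct_mulVec, hy, smul_eq_mul, inv_mul_cancel₀ ht]
  simp [div_eq_inv_mul, inv_pow]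

theorem normalizedMulVec_injOn (hA : IsUnit A.det) :
    Set.InjOn (normalizedMulVec A s) {y | s ⬝ᵥ y = 1 ∧ s ⬝ᵥ A *ᵥ y ≠ 0} := by
  rintro y ⟨hy, ht⟩ y' ⟨hy', ht'⟩ h
  have hinj := mulVec_injective_iff_isUnit.2 ((isUnit_iff_isUnit_det A).2 hA)
  simp only [normalizedMulVec, ← mulVec_smul] at h
  have h' := hinj h
  have hscal : (s ⬝ᵥ A *ᵥ y)⁻¹ = (s ⬝ᵥ A *ᵥ y')⁻¹ := by
    simpa [hy, hy'] using congrArg (s ⬝ᵥ ·) h'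
  rw [hscal] at h'
  exact smul_right_injective _ (inv_ne_zero ht') h'

end NormalizedMulVec

theorem MeasurableEmbedding.setLIntegral_image_eq_comap {α β : Type*} [MeasurableSpace α]
    [MeasurableSpace β] {f : α → β} (hf : MeasurableEmbedding f) (μ : Measure β) (s : Set α)
    (g : β → ℝ≥0∞) : ∫⁻ y in f '' s, g y ∂μ = ∫⁻ x in s, g (f x) ∂μ.comap f :=
  calc ∫⁻ y in f '' s, g y ∂μ = ∫⁻ y in f '' s, g y ∂(μ.comap f).map f := by
        rw [hf.map_comap, Measure.restrict_restrict' hf.measurableSet_range,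
          Set.inter_eq_left.2 (Set.image_subset_range f s)]
    _ = ∫⁻ x in s, g (f x) ∂μ.comap f := by
        rw [hf.restrict_map, hf.injective.preimage_image, hf.lintegral_map]

section AffineChart

variable {E : Type*} [NormedAddCommGroup E] [NormedSpace ℝ E] [MeasurableSpace E] [BorelSpace E]
  {n : ℕ} (p : E) {L : (Fin n → ℝ) →ₗ[ℝ] E}

lemma measurableEmbedding_const_add_linearMap (hL : Injective L) :
    MeasurableEmbedding fun x => p + L x :=
  ((Homeomorph.addLeft p).isClosedEmbedding.comp
    (L.isClosedEmbedding_of_injective (LinearMap.ker_eq_bot.2 hL))).measurableEmbedding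

lemma isAddLeftInvariant_comap_hausdorffMeasure (hL : Injective L) :
    ((μH[n] : Measure E).comap fun x => p + L x).IsAddLeftInvariant := by
  have hψ := measurableEmbedding_const_add_linearMap p hL
  refine (forall_measure_preimage_add_iff _).1 fun v W _ => ?_
  have himage : (fun x => p + L x) '' ((v + ·) ⁻¹' W) =
      (L (-v) + ·) '' ((fun x => p + L x) '' W) := by
    rw [← neg_neg v, ← Set.image_add_left, Set.image_image, Set.image_image, neg_neg]
    congr! 1 with x
    rw [map_add]; abel
  rw [hψ.comap_apply, hψ.comap_apply, himage]
  exact (IsometryEquiv.addLeft (L (-v))).hausdorffMeasure_image _ _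

lemma isFiniteMeasureOnCompacts_comap_hausdorffMeasure (hL : Injective L) :
    IsFiniteMeasureOnCompacts ((μH[n] : Measure E).comap fun x => p + L x) := by
  refine ⟨fun K hK => ?_⟩
  have hlip : LipschitzWith (1 * ‖LinearMap.toContinuousLinearMap L‖₊) (fun x => p + L x) :=
    (IsometryEquiv.addLeft p).isometry.lipschitz.comp (LinearMap.toContinuousLinearMap L).lipschitz
  rw [(measurableEmbedding_const_add_linearMap p hL).comap_apply]
  refine (hlip.hausdorffMeasure_image_le n.cast_nonneg K).trans_lt ?_
  have hvol : (μH[n] : Measure (Fin n → ℝ)) = volume := by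
    simpa using hausdorffMeasure_pi_real (ι := Fin n)
  rw [hvol]
  exact ENNReal.mul_lt_top (by simp) hK.measure_lt_top

theorem exists_comap_hausdorffMeasure_eq_smul_volume (hL : Injective L) :
    ∃ c : ℝ≥0, (μH[n] : Measure E).comap (fun x => p + L x) = c • volume := by
  have := isAddLeftInvariant_comap_hausdorffMeasure p hL
  have := isFiniteMeasureOnCompacts_comap_hausdorffMeasure p hL
  exact ⟨_, Measure.isAddLeftInvariant_eq_smul _ volume⟩

theorem hausdorffMeasure_image_image_eq_setLIntegral (hL : Injective L) {T : Set (Fin n → ℝ)}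
    (hT : MeasurableSet T) {g : (Fin n → ℝ) → Fin n → ℝ}
    {g' : (Fin n → ℝ) → (Fin n → ℝ) →L[ℝ] Fin n → ℝ} (hg' : ∀ x ∈ T, HasFDerivWithinAt g (g' x) T x)
    (hg : Set.InjOn g T) {f : E → ℝ≥0∞} (hf : ∀ x ∈ T, f (p + L x) = ENNReal.ofReal |(g' x).det|) :
    μH[n] ((fun x => p + L x) '' (g '' T)) = ∫⁻ y in (fun x => p + L x) '' T, f y ∂μH[n] := by
  have hψ := measurableEmbedding_const_add_linearMap p hL
  obtain ⟨c, hc⟩ := exists_comap_hausdorffMeasure_eq_smul_volume p hL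
  rw [← hψ.comap_apply, hψ.setLIntegral_image_eq_comap, hc, Measure.smul_apply,
    Measure.restrict_smul, lintegral_smul_measure, setLIntegral_congr_fun hT hf,
    lintegral_abs_det_fderiv_eq_addHaar_image volume hT hg' hg]

end AffineChart

namespace HyperplaneChart

open LinearMap (ker)

variable {n : ℕ}

abbrev coordSum (n : ℕ) : (Fin (n + 1) → ℝ) →ₗ[ℝ] ℝ := dotProductBilin ℝ ℝ 1

def kerParam (n : ℕ) : (Fin n → ℝ) →ₗ[ℝ] Fin (n + 1) → ℝ :=
  (Fin.consLinearEquiv ℝ fun _ => ℝ).toLinearMap ∘ₗ (-dotProductBilin ℝ ℝ 1).prod LinearMap.id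

def tailLin (n : ℕ) : (Fin (n + 1) → ℝ) →ₗ[ℝ] Fin n → ℝ := LinearMap.funLeft ℝ ℝ Fin.succ

def chart (n : ℕ) (x : Fin n → ℝ) : Fin (n + 1) → ℝ := Pi.single 0 1 + kerParam n x

@[simp] lemma kerParam_apply (x : Fin n → ℝ) : kerParam n x = Fin.cons (-(1 ⬝ᵥ x)) x := rfl

lemma one_dotProduct_cons (a : ℝ) (x : Fin n → ℝ) :
    1 ⬝ᵥ (Fin.cons a x : Fin (n + 1) → ℝ) = a + 1 ⬝ᵥ x := by
  simp [one_dotProduct, Fin.sum_univ_succ]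

@[simp] lemma one_dotProduct_kerParam (x : Fin n → ℝ) : 1 ⬝ᵥ kerParam n x = 0 := by
  simp [one_dotProduct_cons]

@[simp] lemma tail_kerParam (x : Fin n → ℝ) : Fin.tail (kerParam n x) = x := by simp

lemma kerParam_tail {y : Fin (n + 1) → ℝ} (hy : 1 ⬝ᵥ y = 0) : kerParam n (Fin.tail y) = y := by
  rw [← Fin.cons_self_tail y, one_dotProduct_cons] at hy
  rw [kerParam_apply, ← Fin.cons_self_tail y, Fin.tail_cons, eq_neg_of_add_eq_zero_right hy,
    neg_neg]

lemma chart_eq_cons (x : Fin n → ℝ) : chart n x = Fin.cons (1 - 1 ⬝ᵥ x) x := by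
  ext i
  refine Fin.cases ?_ (fun i => ?_) i <;> simp [chart, sub_eq_add_neg]

@[simp] lemma one_dotProduct_chart (x : Fin n → ℝ) : 1 ⬝ᵥ chart n x = 1 := by
  simp [chart_eq_cons, one_dotProduct_cons]

@[simp] lemma tail_chart (x : Fin n → ℝ) : Fin.tail (chart n x) = x := by simp [chart_eq_cons]

lemma chart_tail {y : Fin (n + 1) → ℝ} (hy : 1 ⬝ᵥ y = 1) : chart n (Fin.tail y) = y := by
  rw [← Fin.cons_self_tail y, one_dotProduct_cons] at hy
  rw [chart_eq_cons, ← Fin.cons_self_tail y, Fin.tail_cons]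
  congr 1; linarith

lemma kerParam_injective : Injective (kerParam n) :=
  LeftInverse.injective tail_kerParam

def kerEquiv (n : ℕ) : ker (coordSum n) ≃ₗ[ℝ] (Fin n → ℝ) :=
  LinearEquiv.ofLinearMap (tailLin n ∘ₗ (ker (coordSum n)).subtype)
    ((kerParam n).codRestrict _ one_dotProduct_kerParam)
    (LinearMap.ext tail_kerParam)
    (LinearMap.ext fun y => Subtype.ext (kerParam_tail y.2))

theorem det_tailLin_comp_comp_kerParam {C : (Fin (n + 1) → ℝ) →ₗ[ℝ] Fin (n + 1) → ℝ}
    (hC : coordSum n ∘ₗ C = coordSum n) : (tailLin n ∘ₗ C ∘ₗ kerParam n).det = C.det := by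
  rw [LinearMap.det_eq_det_restrict_ker_of_comp_eq hC, ← LinearMap.det_conj _ (kerEquiv n)]
  rfl

lemma chart_injective : Injective (chart n) :=
  LeftInverse.injective tail_chart

variable (A : Matrix (Fin (n + 1)) (Fin (n + 1)) ℝ)

def chartAction (x : Fin n → ℝ) : Fin n → ℝ := Fin.tail (normalizedMulVec A 1 (chart n x))

def chartActionDeriv (x : Fin n → ℝ) : (Fin n → ℝ) →L[ℝ] Fin n → ℝ :=
  LinearMap.toContinuousLinearMap
    (tailLin n ∘ₗ toLin' (normalizedMulVecDeriv A 1 (chart n x)) ∘ₗ kerParam n)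

variable {A}

lemma chart_chartAction {x : Fin n → ℝ} (hx : 1 ⬝ᵥ A *ᵥ chart n x ≠ 0) :
    chart n (chartAction A x) = normalizedMulVec A 1 (chart n x) :=
  chart_tail (dotProduct_normalizedMulVec hx)

lemma image_chartAction_image {T : Set (Fin n → ℝ)} (hT : ∀ x ∈ T, 1 ⬝ᵥ A *ᵥ chart n x ≠ 0) :
    chart n '' (chartAction A '' T) = normalizedMulVec A 1 '' (chart n '' T) := by
  rw [Set.image_image, Set.image_image]
  exact Set.image_congr fun x hx => chart_chartAction (hT x hx)

lemma chartAction_injOn (hA : IsUnit A.det) :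
    Set.InjOn (chartAction A) {x | 1 ⬝ᵥ A *ᵥ chart n x ≠ 0} := by
  intro x hx x' hx' h
  have h' := congrArg (chart n) h
  rw [chart_chartAction hx, chart_chartAction hx'] at h'
  exact chart_injective <|
    normalizedMulVec_injOn hA ⟨one_dotProduct_chart x, hx⟩ ⟨one_dotProduct_chart x', hx'⟩ h'

lemma hasFDerivAt_chartAction {x : Fin n → ℝ} (hx : 1 ⬝ᵥ A *ᵥ chart n x ≠ 0) :
    HasFDerivAt (chartAction A) (chartActionDeriv A x) x := by
  have hchart : HasFDerivAt (chart n) (LinearMap.toContinuousLinearMap (kerParam n)) x :=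
    (LinearMap.toContinuousLinearMap (kerParam n)).hasFDerivAt.const_add _
  exact (LinearMap.toContinuousLinearMap (tailLin n)).hasFDerivAt.comp x
    ((hasFDerivAt_normalizedMulVec hx).comp x hchart)

theorem det_chartActionDeriv {x : Fin n → ℝ} (hx : 1 ⬝ᵥ A *ᵥ chart n x ≠ 0) :
    (chartActionDeriv A x).det = A.det / (1 ⬝ᵥ A *ᵥ chart n x) ^ (n + 1) := by
  set y := chart n x
  set C := normalizedMulVecDeriv A 1 y + vecMulVec (normalizedMulVec A 1 y) 1
  have hC : coordSum n ∘ₗ toLin' C = coordSum n := by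
    refine LinearMap.ext fun v => ?_
    exact dotProduct_normalizedMulVecDeriv_add_mulVec hx v
  have hker : tailLin n ∘ₗ toLin' (normalizedMulVecDeriv A 1 y) ∘ₗ kerParam n =
      tailLin n ∘ₗ toLin' C ∘ₗ kerParam n := by
    refine LinearMap.ext fun v => ?_
    simp only [LinearMap.comp_apply, toLin'_apply, C,
      normalizedMulVecDeriv_add_mulVec_of_dotProduct_eq_zero (one_dotProduct_kerParam v)]
  rw [ContinuousLinearMap.det, chartActionDeriv, LinearMap.coe_toContinuousLinearMap, hker,
    det_tailLin_comp_comp_kerParam hC, LinearMap.det_toLin',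
    det_normalizedMulVecDeriv_add (one_dotProduct_chart x) hx, Fintype.card_fin]

end HyperplaneChart

section Simplex

variable {ι : Type*} [Fintype ι]

lemma sum_abs_eq_one_dotProduct {v : ι → ℝ} (hv : ∀ i, 0 ≤ v i) : ∑ i, |v i| = 1 ⬝ᵥ v := by
  rw [one_dotProduct]
  exact Finset.sum_congr rfl fun i _ => abs_of_nonneg (hv i)

variable {A : Matrix ι ι ℝ} {y : ι → ℝ}

lemma mulVec_nonneg_of_nonneg (hA : ∀ i j, 0 ≤ A i j) (hy : ∀ i, 0 ≤ y i) (i : ι) :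
    0 ≤ (A *ᵥ y) i :=
  Finset.sum_nonneg fun j _ => mul_nonneg (hA i j) (hy j)

variable [DecidableEq ι]

lemma one_dotProduct_mulVec_pos (hA : IsUnit A.det) (hApos : ∀ i j, 0 ≤ A i j)
    (hy : ∀ i, 0 ≤ y i) (hy0 : y ≠ 0) : 0 < 1 ⬝ᵥ A *ᵥ y := by
  have hAy := mulVec_nonneg_of_nonneg hApos hy
  refine (one_dotProduct (A *ᵥ y) ▸ Finset.sum_nonneg fun i _ => hAy i).lt_of_ne fun h => hy0 ?_
  have hAy0 : A *ᵥ y = A *ᵥ 0 := by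
    rw [mulVec_zero]
    exact funext fun i => (Finset.sum_eq_zero_iff_of_nonneg fun i _ => hAy i).1
      ((one_dotProduct _).symm.trans h.symm) i (Finset.mem_univ i)
  exact mulVec_injective_iff_isUnit.2 ((isUnit_iff_isUnit_det A).2 hA) hAy0

end Simplex

end

theorem jacobian_of_projective_action_general (d : ℕ)
    (A : Matrix (Fin d) (Fin d) ℝ) (hA : IsUnit A.det)
    (hApos : ∀ i j, 0 ≤ A i j)
    (S : Set (Fin d → ℝ)) (hS : MeasurableSet S)
    (hSΔ : S ⊆ {y : Fin d → ℝ | (∀ i, 0 ≤ y i) ∧ ∑ i, |y i| = 1}) :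
    μH[(d : ℝ) - 1] ((fun y => (∑ i, |A.mulVec y i|)⁻¹ • A.mulVec y) '' S)
      = ∫⁻ y in S,
          ENNReal.ofReal (|A.det| / (∑ i, |A.mulVec y i|) ^ d) ∂(μH[(d : ℝ) - 1]) := by
  cases d with
  | zero =>
    have hS0 : S = ∅ := Set.eq_empty_of_forall_notMem fun y hy => by simpa using (hSΔ hy).2
    simp [hS0]
  | succ n =>
    open HyperplaneChart in
    have hΔ : ∀ y ∈ S, 1 ⬝ᵥ y = 1 ∧ ∑ i, |(A *ᵥ y) i| = 1 ⬝ᵥ A *ᵥ y ∧ 0 < 1 ⬝ᵥ A *ᵥ y := by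
      intro y hy
      obtain ⟨hy0, hy1⟩ := hSΔ hy
      rw [sum_abs_eq_one_dotProduct hy0] at hy1
      exact ⟨hy1, sum_abs_eq_one_dotProduct (mulVec_nonneg_of_nonneg hApos hy0),
        one_dotProduct_mulVec_pos hA hApos hy0 (by rintro rfl; simp at hy1)⟩
    set T := chart n ⁻¹' S
    have hST : chart n '' T = S :=
      Set.image_preimage_eq_of_subset fun y hy => ⟨Fin.tail y, chart_tail (hΔ y hy).1⟩
    have ht : ∀ x ∈ T, 1 ⬝ᵥ A *ᵥ chart n x ≠ 0 := fun x hx => (hΔ _ hx).2.2.ne'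
    have himage : (fun y => (∑ i, |(A *ᵥ y) i|)⁻¹ • A *ᵥ y) '' S = normalizedMulVec A 1 '' S :=
      Set.image_congr fun y hy => by rw [normalizedMulVec, (hΔ y hy).2.1]
    rw [Nat.cast_add_one, add_sub_cancel_right, himage, ← hST, ← image_chartAction_image ht]
    have hT : MeasurableSet T :=
      (measurableEmbedding_const_add_linearMap _ kerParam_injective).measurable hS
    refine hausdorffMeasure_image_image_eq_setLIntegral (Pi.single 0 1) kerParam_injective hT
      (fun x hx => (hasFDerivAt_chartAction (ht x hx)).hasFDerivWithinAt)
      ((chartAction_injOn hA).mono ht) fun x hx => ?_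
    rw [det_chartActionDeriv (ht x hx), abs_div, abs_pow, abs_of_pos (hΔ _ hx).2.2,
      ← (hΔ _ hx).2.1]
    rfl

/-- Veech's Proposition 5.2: the Jacobian of `L_A(y) = Ay/‖Ay‖₁` on the standard
simplex `Δ`, with respect to the surface measure `ν` on `Δ`, is
`|det A| / ‖Ay‖₁^d`.  Formulated measure-theoretically: for every measurable
`S ⊆ Δ`, `ν(L_A(S)) = ∫_S |det A| / ‖Ay‖₁^d dν(y)`. -/
theorem jacobian_of_projective_action (d : ℕ) (hd : 0 < d)
    (A : Matrix (Fin d) (Fin d) ℝ) (hA : IsUnit A.det)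
    (hApos : ∀ i j, 0 ≤ A i j)
    (hAmap : ∀ y : Fin d → ℝ, (∀ i, 0 < y i) → ∀ i, 0 < A.mulVec y i)
    (S : Set (Fin d → ℝ)) (hS : MeasurableSet S)
    (hSΔ : S ⊆ {y : Fin d → ℝ | (∀ i, 0 ≤ y i) ∧ ∑ i, |y i| = 1}) :
    μH[(d : ℝ) - 1] ((fun y => (∑ i, |A.mulVec y i|)⁻¹ • A.mulVec y) '' S)
      = ∫⁻ y in S,
          ENNReal.ofReal (|A.det| / (∑ i, |A.mulVec y i|) ^ d) ∂(μH[(d : ℝ) - 1]) :=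
  jacobian_of_projective_action_general d A hA hApos S hS hSΔ
end

section
/- Let O = (1 1; 0 1) and I = (1 0; 1 1). Then ⋂_{n∈ℕ} (OI)ⁿ·ℝ₊² = ℝ₊·(φ, 1), where φ = (1+√5)/2 is the golden ratio. -/
/-!
`OI = !![2, 1; 1, 1]` is symmetric, with eigenvectors `(φ, 1)` and `(ψ, 1)` for the eigenvalues
`φ²` and `ψ² = φ⁻²`. If `y = (OI)ⁿ v` with `v ≥ 0`, the coordinate `ψ y₀ + y₁` is `ψ²ⁿ` times
that of `v`, while `φ y₀ + y₁` is `φ²ⁿ` times that of `v`; on `ℝ₊²` the first coordinate is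
bounded by the second, so `|ψ y₀ + y₁| ≤ (ψ / φ)²ⁿ (φ y₀ + y₁) → 0`, which leaves only the ray
through `(φ, 1)`.
-/

open Matrix

open Filter Topology Real goldenRatio

section Eigenvectors

variable {ι R : Type*} [Fintype ι] [DecidableEq ι] [CommSemiring R]

theorem pow_mulVec_eq_pow_smul {M : Matrix ι ι R} {w : ι → R} {μ : R} (h : M *ᵥ w = μ • w)
    (n : ℕ) : M ^ n *ᵥ w = μ ^ n • w := by
  induction n with
  | zero => simp
  | succ n ih => rw [pow_succ, ← mulVec_mulVec, h, mulVec_smul, ih, smul_smul, ← pow_succ']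

theorem vecMul_pow_eq_pow_smul {M : Matrix ι ι R} {ℓ : ι → R} {μ : R} (h : ℓ ᵥ* M = μ • ℓ)
    (n : ℕ) : ℓ ᵥ* M ^ n = μ ^ n • ℓ := by
  induction n with
  | zero => simp
  | succ n ih => rw [pow_succ', ← vecMul_vecMul, h, smul_vecMul, ih, smul_smul, pow_succ']

theorem dotProduct_pow_mulVec {M : Matrix ι ι R} {ℓ : ι → R} {μ : R} (h : ℓ ᵥ* M = μ • ℓ)
    (n : ℕ) (v : ι → R) : ℓ ⬝ᵥ (M ^ n *ᵥ v) = μ ^ n * (ℓ ⬝ᵥ v) := by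
  rw [dotProduct_mulVec, vecMul_pow_eq_pow_smul h, smul_dotProduct, smul_eq_mul]

end Eigenvectors

section Cones

variable {M : Matrix (Fin 2) (Fin 2) ℝ}

theorem nonneg_of_mem_matCone_one {y : Fin 2 → ℝ} (hy : y ∈ matCone 1) (i : Fin 2) :
    0 ≤ y i := by
  obtain ⟨v, hv, rfl⟩ := hy
  simpa using hv i

theorem smul_mem_matCone_pow {w : Fin 2 → ℝ} {ν c : ℝ} (hw : M *ᵥ w = ν • w) (hν : 0 < ν)
    (hw₀ : ∀ i, 0 ≤ w i) (hc : 0 ≤ c) (n : ℕ) : c • w ∈ matCone (M ^ n) := by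
  refine ⟨(c / ν ^ n) • w, fun i => mul_nonneg (by positivity) (hw₀ i), ?_⟩
  rw [mulVec_smul, pow_mulVec_eq_pow_smul hw, smul_smul, div_mul_cancel₀ _ (by positivity)]

theorem dotProduct_eq_zero_of_forall_mem_matCone_pow {ℓ u y : Fin 2 → ℝ} {μ ν : ℝ}
    (hℓ : ℓ ᵥ* M = μ • ℓ) (hu : u ᵥ* M = ν • u) (hμν : |μ| < ν)
    (hℓu : ∀ v : Fin 2 → ℝ, (∀ i, 0 ≤ v i) → |ℓ ⬝ᵥ v| ≤ u ⬝ᵥ v)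
    (hy : ∀ n, y ∈ matCone (M ^ n)) : ℓ ⬝ᵥ y = 0 := by
  have hν : 0 < ν := (abs_nonneg μ).trans_lt hμν
  have hbound (n : ℕ) : |ℓ ⬝ᵥ y| ≤ (|μ| / ν) ^ n * (u ⬝ᵥ y) := by
    obtain ⟨v, hv, rfl⟩ := hy n
    rw [dotProduct_pow_mulVec hℓ, dotProduct_pow_mulVec hu, abs_mul, abs_pow]
    calc |μ| ^ n * |ℓ ⬝ᵥ v| ≤ |μ| ^ n * (u ⬝ᵥ v) := by gcongr; exact hℓu v hv
      _ = (|μ| / ν) ^ n * (ν ^ n * (u ⬝ᵥ v)) := by rw [div_pow]; field_simp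
  have hlim : Tendsto (fun n : ℕ => (|μ| / ν) ^ n * (u ⬝ᵥ y)) atTop (𝓝 0) := by
    simpa using (tendsto_pow_atTop_nhds_zero_of_lt_one (by positivity)
      ((div_lt_one hν).2 hμν)).mul_const (u ⬝ᵥ y)
  exact abs_nonpos_iff.1 (ge_of_tendsto' hlim hbound)

end Cones

section Golden

theorem OI_eq : (!![1, 1; 0, 1] * !![1, 0; 1, 1] : Matrix (Fin 2) (Fin 2) ℝ) = !![2, 1; 1, 1] := by
  norm_num [mul_fin_two]

variable {x : ℝ}

theorem sq_smul_vec_one (hx : x ^ 2 = x + 1) : x ^ 2 • ![x, 1] = ![2 * x + 1, x + 1] := by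
  rw [smul_vec2]
  exact vec2_eq (by linear_combination (x + 1) * hx) (by linear_combination hx)

theorem vec_one_vecMul_eq_sq_smul (hx : x ^ 2 = x + 1) :
    ![x, 1] ᵥ* !![2, 1; 1, 1] = x ^ 2 • ![x, 1] := by
  rw [sq_smul_vec_one hx]
  simp [mul_comm]

theorem mulVec_vec_one_eq_sq_smul (hx : x ^ 2 = x + 1) :
    !![2, 1; 1, 1] *ᵥ ![x, 1] = x ^ 2 • ![x, 1] := by
  rw [sq_smul_vec_one hx]
  ext i
  fin_cases i <;> simp [mulVec, mul_comm]

theorem abs_goldenConj_sq_lt : |ψ ^ 2| < φ ^ 2 := by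
  rw [abs_of_nonneg (sq_nonneg ψ), goldenConj_sq, goldenRatio_sq]
  linarith [goldenConj_neg, goldenRatio_pos]

theorem abs_goldenConj_dotProduct_le {v : Fin 2 → ℝ} (hv : ∀ i, 0 ≤ v i) :
    |![ψ, 1] ⬝ᵥ v| ≤ ![φ, 1] ⬝ᵥ v := by
  rw [vec2_dotProduct, vec2_dotProduct, abs_le]
  simp only [cons_val_zero, cons_val_one, cons_val_fin_one, one_mul]
  constructor <;> nlinarith [hv 0, hv 1, goldenConj_neg, neg_one_lt_goldenConj, one_lt_goldenRatio]

end Golden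

/-- `⋂ₙ (OI)ⁿ·ℝ₊² = ℝ₊·(φ,1)` where `φ` is the golden ratio,
`O = [[1,1],[0,1]]`, `I = [[1,0],[1,1]]`. -/
theorem iInter_OI_pow_cone :
    (⋂ n : ℕ, matCone (((!![1, 1; 0, 1] * !![1, 0; 1, 1]) : Matrix (Fin 2) (Fin 2) ℝ) ^ n))
      = {y : Fin 2 → ℝ | ∃ c : ℝ, 0 ≤ c ∧ y = c • ![(1 + Real.sqrt 5) / 2, 1]} := by
  rw [OI_eq]
  ext y
  simp only [Set.mem_iInter, Set.mem_ofPred_eq]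
  constructor
  · intro hy
    have hψ : ![ψ, 1] ⬝ᵥ y = 0 :=
      dotProduct_eq_zero_of_forall_mem_matCone_pow
        (vec_one_vecMul_eq_sq_smul goldenConj_sq) (vec_one_vecMul_eq_sq_smul goldenRatio_sq)
        abs_goldenConj_sq_lt (fun _ => abs_goldenConj_dotProduct_le) hy
    have hy₀ : y 0 = φ * y 1 := by
      rw [vec2_dotProduct] at hψ
      simp only [cons_val_zero, cons_val_one, cons_val_fin_one, one_mul] at hψ
      linear_combination (-φ) * hψ + y 0 * goldenRatio_mul_goldenConj
    refine ⟨y 1, nonneg_of_mem_matCone_one (by simpa using hy 0) 1, ?_⟩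
    ext i
    fin_cases i <;> simp [hy₀, mul_comm]
  · rintro ⟨c, hc, rfl⟩ n
    refine smul_mem_matCone_pow (mulVec_vec_one_eq_sq_smul goldenRatio_sq) (by positivity) ?_ hc n
    intro i
    fin_cases i <;> simp [goldenRatio_pos.le]
end

section
/- Let F : [0,1] → [0,1] be defined by F(x) = 2x for x ∈ [0,1/2] and F(x) = (1−x)/x for x ∈ [1/2,1], and let G̃ be the map on ℝ₊² defined piecewise by G̃(v) = m⁻¹v where m = [[1,0],[1,2]] if v ∈ m·ℝ₊² and m = [[1,1],[1,0]] if v ∈ [[1,1],[1,0]]·ℝ₊². Then F ∘ φ = φ ∘ G̃ wherever both sides are defined, where φ(x,y) = x/(x+y). -/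
open Matrix

/-- The map `F : [0,1] → [0,1]`, `F(x) = 2x` on `[0,1/2]` and `(1-x)/x` on `[1/2,1]`. -/
noncomputable def Fmap (x : ℝ) : ℝ := if x ≤ 1 / 2 then 2 * x else (1 - x) / x

/-- Projection `φ(x,y) = x/(x+y)`. -/
noncomputable def phi (v : Fin 2 → ℝ) : ℝ := v 0 / (v 0 + v 1)

/-!
Both cones are images of the positive quadrant, so write `v = m w` with `w` positive; then
`m⁻¹ v = w`, and the claim becomes `F (φ (m w)) = φ w`. With `t = φ w ∈ (0, 1)` one computes
`φ (m w) = t / 2` for `m = [[1,0],[1,2]]` and `φ (m w) = 1 / (1 + t)` for `m = [[1,1],[1,0]]`;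
these land in the left and right branch of `F` respectively, and each branch inverts its map.
-/

lemma Matrix.inv_mulVec_mulVec_of_isUnit_det {n α : Type*} [Fintype n] [DecidableEq n]
    [CommRing α] {m : Matrix n n α} (hm : IsUnit m.det) (w : n → α) : m⁻¹ *ᵥ (m *ᵥ w) = w := by
  rw [mulVec_mulVec, nonsing_inv_mul m hm, one_mulVec]

lemma phi_mem_Ioo {w : Fin 2 → ℝ} (hw : ∀ i, 0 < w i) : phi w ∈ Set.Ioo 0 1 := by
  have h₀ := hw 0
  have h₁ := hw 1
  constructor
  · exact div_pos h₀ (by positivity)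
  · exact (div_lt_one (by positivity)).2 (by linarith)

lemma phi_mulVec_one_zero_one_two (w : Fin 2 → ℝ) :
    phi (!![1, 0; 1, 2] *ᵥ w) = phi w / 2 := by
  simp only [phi, mulVec_fin_two, of_apply, cons_val', cons_val_zero, cons_val_one,
    empty_val', cons_val_fin_one]
  rw [div_div]
  ring

lemma phi_mulVec_one_one_one_zero {w : Fin 2 → ℝ} (hw : w 0 + w 1 ≠ 0) :
    phi (!![1, 1; 1, 0] *ᵥ w) = 1 / (1 + phi w) := by
  simp only [phi, mulVec_fin_two, of_apply, cons_val', cons_val_zero, cons_val_one,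
    empty_val', cons_val_fin_one]
  field_simp
  ring

lemma Fmap_div_two {t : ℝ} (ht : t ≤ 1) : Fmap (t / 2) = t := by
  rw [Fmap, if_pos (by linarith)]
  ring

lemma Fmap_one_div_one_add {t : ℝ} (ht₀ : -1 < t) (ht₁ : t < 1) : Fmap (1 / (1 + t)) = t := by
  have hpos : 0 < 1 + t := by linarith
  have hbranch : ¬ 1 / (1 + t) ≤ 1 / 2 := by
    rw [not_le, one_div_lt_one_div (by norm_num) hpos]
    linarith
  rw [Fmap, if_neg hbranch]
  field_simp
  ring

/-- `F ∘ φ = φ ∘ G̃` wherever defined: on the interior of each of the two cones,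
`F(φ(v)) = φ(m⁻¹ v)` for the corresponding matrix `m`. -/
theorem F_semiconjugate_to_matrices_graph (v : Fin 2 → ℝ) :
    ((∃ w : Fin 2 → ℝ, (∀ i, 0 < w i) ∧ v = (!![1, 0; 1, 2] : Matrix (Fin 2) (Fin 2) ℝ).mulVec w) →
      Fmap (phi v) = phi ((!![1, 0; 1, 2] : Matrix (Fin 2) (Fin 2) ℝ)⁻¹.mulVec v)) ∧
    ((∃ w : Fin 2 → ℝ, (∀ i, 0 < w i) ∧ v = (!![1, 1; 1, 0] : Matrix (Fin 2) (Fin 2) ℝ).mulVec w) →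
      Fmap (phi v) = phi ((!![1, 1; 1, 0] : Matrix (Fin 2) (Fin 2) ℝ)⁻¹.mulVec v)) := by
  constructor
  · rintro ⟨w, hw, rfl⟩
    rw [inv_mulVec_mulVec_of_isUnit_det (by simp [det_fin_two_of]),
      phi_mulVec_one_zero_one_two, Fmap_div_two (phi_mem_Ioo hw).2.le]
  · rintro ⟨w, hw, rfl⟩
    have hsum : w 0 + w 1 ≠ 0 := by linarith [hw 0, hw 1]
    obtain ⟨ht₀, ht₁⟩ := phi_mem_Ioo hw
    rw [inv_mulVec_mulVec_of_isUnit_det (by simp [det_fin_two_of]),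
      phi_mulVec_one_one_one_zero hsum, Fmap_one_div_one_add (by linarith) ht₁]
end

section
/- The function f(x,y) = 1/((2x+y)(x+y)) on (ℝ₊*)² satisfies the invariance relation f(v) = |det m₁| f(m₁ v) + |det m₂| f(m₂ v) for all v ∈ (ℝ₊*)², where m₁ = [[1,0],[1,2]] and m₂ = [[1,1],[1,0]]. -/
open Matrix

/-- Since `m₁ (x, y) = (x, x + 2y)` and `m₂ (x, y) = (x + y, x)`, the invariance relation is this
identity; both sides equal `(3x + 2y) / ((3x + 2y)(2x + y)(x + y))`. -/
theorem one_div_mul_eq_add_of_ne_zero {x y : ℝ} (h₁ : x + y ≠ 0) (h₂ : 2 * x + y ≠ 0)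
    (h₃ : 3 * x + 2 * y ≠ 0) :
    1 / ((2 * x + y) * (x + y)) =
      2 / ((3 * x + 2 * y) * (2 * x + 2 * y)) + 1 / ((3 * x + 2 * y) * (2 * x + y)) := by
  have h₁' : 2 * x + 2 * y ≠ 0 := by contrapose! h₁; linarith
  rw [div_add_div _ _ (mul_ne_zero h₃ h₁') (mul_ne_zero h₃ h₂),
    div_eq_div_iff (mul_ne_zero h₂ h₁) (by positivity)]
  ring

/-- The density `f(x,y) = 1/((2x+y)(x+y))` satisfies the invariance relation
`f(v) = |det m₁| f(m₁ v) + |det m₂| f(m₂ v)` on the open positive quadrant. -/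
theorem invariant_density_dim_one_example :
    let f : (Fin 2 → ℝ) → ℝ := fun v => 1 / ((2 * v 0 + v 1) * (v 0 + v 1))
    let m₁ : Matrix (Fin 2) (Fin 2) ℝ := !![1, 0; 1, 2]
    let m₂ : Matrix (Fin 2) (Fin 2) ℝ := !![1, 1; 1, 0]
    ∀ v : Fin 2 → ℝ, (∀ i, 0 < v i) →
      f v = |m₁.det| * f (m₁.mulVec v) + |m₂.det| * f (m₂.mulVec v) := by
  intro f m₁ m₂ v hv
  have hx := hv 0
  have hy := hv 1
  have hdet₁ : |m₁.det| = 2 := by norm_num [m₁, det_fin_two_of]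
  have hdet₂ : |m₂.det| = 1 := by norm_num [m₂, det_fin_two_of]
  have hm₁ : m₁ *ᵥ v = ![v 0, v 0 + 2 * v 1] := by
    ext i; fin_cases i <;> simp [m₁, mulVec, dotProduct, Fin.sum_univ_two]
  have hm₂ : m₂ *ᵥ v = ![v 0 + v 1, v 0] := by
    ext i; fin_cases i <;> simp [m₂, mulVec, dotProduct, Fin.sum_univ_two]
  simp only [f, hdet₁, hdet₂, hm₁, hm₂, cons_val_zero, cons_val_one]
  rw [one_div_mul_eq_add_of_ne_zero (by positivity) (by positivity) (by positivity)]
  ring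
end

section
/- Let m0 = [[0,1,0],[1,0,0],[0,1,1]] and m1 = [[1,1,0],[0,0,1],[0,1,0]]. The function f(x₀,x₁,x₂) = 1/((x₀+x₁+x₂)(x₀+x₁)(x₁+x₂)) on the open positive octant satisfies f(v) = |det m0|·f(m0 v) + |det m1|·f(m1 v) for all v in the open positive octant. -/
/-!
Both matrices have determinant `-1`. Writing `s = x₀+x₁+x₂`, `p = x₀+x₁`, `q = x₁+x₂`, the images
`m0 x = (x₁, x₀, x₁+x₂)` and `m1 x = (x₀+x₁, x₂, x₁)` have coordinate sum `p + q` and pair sums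
`{p, s}` and `{s, q}`, so the relation is `1/(s p q) = 1/((p+q) p s) + 1/((p+q) s q)`, i.e.
`1/p + 1/q = (p+q)/(p q)`.
-/

open Matrix

section CassaigneMatrices

variable {R : Type*}

theorem det_cassaigne_m0 [CommRing R] :
    (!![0, 1, 0; 1, 0, 0; 0, 1, 1] : Matrix (Fin 3) (Fin 3) R).det = -1 := by
  simp [det_fin_three]

theorem det_cassaigne_m1 [CommRing R] :
    (!![1, 1, 0; 0, 0, 1; 0, 1, 0] : Matrix (Fin 3) (Fin 3) R).det = -1 := by
  simp [det_fin_three]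

theorem mulVec_cassaigne_m0 [NonAssocSemiring R] (v : Fin 3 → R) :
    (!![0, 1, 0; 1, 0, 0; 0, 1, 1] : Matrix (Fin 3) (Fin 3) R) *ᵥ v = ![v 1, v 0, v 1 + v 2] := by
  ext i
  fin_cases i <;> simp [mulVec, vecHead, vecTail]

theorem mulVec_cassaigne_m1 [NonAssocSemiring R] (v : Fin 3 → R) :
    (!![1, 1, 0; 0, 0, 1; 0, 1, 0] : Matrix (Fin 3) (Fin 3) R) *ᵥ v = ![v 0 + v 1, v 2, v 1] := by
  ext i
  fin_cases i <;> simp [mulVec, vecHead, vecTail]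

end CassaigneMatrices

theorem one_div_mul_mul_eq_add {K : Type*} [Field K] {s p q : K} (hs : s ≠ 0) (hp : p ≠ 0)
    (hq : q ≠ 0) (hpq : p + q ≠ 0) :
    1 / (s * p * q) = 1 / ((p + q) * p * s) + 1 / ((p + q) * s * q) := by
  field_simp
  ring

/-- The density `f = 1/((x₀+x₁+x₂)(x₀+x₁)(x₁+x₂))` satisfies the invariance
relation of the Cassaigne algorithm. -/
theorem cassaigne_invariant_density :
    let f : (Fin 3 → ℝ) → ℝ :=
      fun v => 1 / ((v 0 + v 1 + v 2) * (v 0 + v 1) * (v 1 + v 2))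
    let m0 : Matrix (Fin 3) (Fin 3) ℝ := !![0, 1, 0; 1, 0, 0; 0, 1, 1]
    let m1 : Matrix (Fin 3) (Fin 3) ℝ := !![1, 1, 0; 0, 0, 1; 0, 1, 0]
    ∀ v : Fin 3 → ℝ, (∀ i, 0 < v i) →
      f v = |m0.det| * f (m0.mulVec v) + |m1.det| * f (m1.mulVec v) := by
  intro f m0 m1 v hv
  have h0 := hv 0
  have h1 := hv 1
  have h2 := hv 2
  simp only [f, m0, m1, det_cassaigne_m0, det_cassaigne_m1, mulVec_cassaigne_m0,
    mulVec_cassaigne_m1, abs_neg, abs_one, one_mul, cons_val_zero, cons_val_one, cons_val_two,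
    head_cons, tail_cons]
  convert one_div_mul_mul_eq_add (s := v 0 + v 1 + v 2) (p := v 0 + v 1) (q := v 1 + v 2)
    (by positivity) (by positivity) (by positivity) (by positivity) using 3 <;> ring
end

section
/- The function f(x₀,x₁,x₂) = 2/((x₀+x₁)(x₀+x₂)(x₁+x₂)) satisfies f(v) = Σᵢ |det mᵢ| f(mᵢ v) on the open positive octant, where m0 = [[1,0,0],[0,1,0],[1,1,1]], m1 = [[1,0,0],[1,1,1],[0,0,1]], m2 = [[1,1,1],[0,1,0],[0,0,1]], m3 = [[0,1,1],[1,0,1],[1,1,0]]. -/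
/-!
Write `a = x₀ + x₁`, `b = x₀ + x₂`, `c = x₁ + x₂` for the pair sums of `v = (x₀, x₁, x₂)`, so that `f v = 2 / (a b c)`.
The pair sums of `m₀ v, m₁ v, m₂ v, m₃ v` are `(a, a+b, a+c)`, `(a+b, b, b+c)`, `(a+c, b+c, c)` and
`(b+c, a+c, a+b)`, and the determinants are `1, 1, 1, 2`. The invariance relation is therefore the
partial fraction decomposition of `1 / (a b c)`, which after clearing denominators is the identity
`(a+b)(a+c)(b+c) = ab(a+b) + ac(a+c) + bc(b+c) + 2abc`.
-/

open Matrix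

theorem inv_mul_mul_eq_partialFractions {K : Type*} [Field K] {a b c : K}
    (ha : a ≠ 0) (hb : b ≠ 0) (hc : c ≠ 0) (hab : a + b ≠ 0) (hac : a + c ≠ 0) (hbc : b + c ≠ 0) :
    (a * b * c)⁻¹ = (a * (a + b) * (a + c))⁻¹ + ((a + b) * b * (b + c))⁻¹
      + ((a + c) * (b + c) * c)⁻¹ + 2 * ((a + b) * (a + c) * (b + c))⁻¹ := by
  field_simp
  ring

/-- The density `f = 2/((x₀+x₁)(x₀+x₂)(x₁+x₂))` satisfies the invariance
relation of the reverse algorithm: `f(v) = Σᵢ |det mᵢ| f(mᵢ v)`. -/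
theorem reverse_algorithm_invariant_density :
    let f : (Fin 3 → ℝ) → ℝ :=
      fun v => 2 / ((v 0 + v 1) * (v 0 + v 2) * (v 1 + v 2))
    let m0 : Matrix (Fin 3) (Fin 3) ℝ := !![1, 0, 0; 0, 1, 0; 1, 1, 1]
    let m1 : Matrix (Fin 3) (Fin 3) ℝ := !![1, 0, 0; 1, 1, 1; 0, 0, 1]
    let m2 : Matrix (Fin 3) (Fin 3) ℝ := !![1, 1, 1; 0, 1, 0; 0, 0, 1]
    let m3 : Matrix (Fin 3) (Fin 3) ℝ := !![0, 1, 1; 1, 0, 1; 1, 1, 0]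
    ∀ v : Fin 3 → ℝ, (∀ i, 0 < v i) →
      f v = |m0.det| * f (m0.mulVec v) + |m1.det| * f (m1.mulVec v)
          + |m2.det| * f (m2.mulVec v) + |m3.det| * f (m3.mulVec v) := by
  intro f m0 m1 m2 m3 v hv
  have hm0 : m0 *ᵥ v = ![v 0, v 1, v 0 + v 1 + v 2] := by
    ext i; fin_cases i <;> simp [m0, mulVec, dotProduct, Fin.sum_univ_three]
  have hm1 : m1 *ᵥ v = ![v 0, v 0 + v 1 + v 2, v 2] := by
    ext i; fin_cases i <;> simp [m1, mulVec, dotProduct, Fin.sum_univ_three]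
  have hm2 : m2 *ᵥ v = ![v 0 + v 1 + v 2, v 1, v 2] := by
    ext i; fin_cases i <;> simp [m2, mulVec, dotProduct, Fin.sum_univ_three]
  have hm3 : m3 *ᵥ v = ![v 1 + v 2, v 0 + v 2, v 0 + v 1] := by
    ext i; fin_cases i <;> simp [m3, mulVec, dotProduct, Fin.sum_univ_three]
  obtain ⟨hd0, hd1, hd2, hd3⟩ : m0.det = 1 ∧ m1.det = 1 ∧ m2.det = 1 ∧ m3.det = 2 := by
    simp only [m0, m1, m2, m3, det_fin_three, of_apply, cons_val', cons_val_zero, cons_val_one,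
      cons_val_two, head_cons, tail_cons, empty_val', cons_val_fin_one]
    norm_num
  have h0 := hv 0; have h1 := hv 1; have h2 := hv 2
  have key := inv_mul_mul_eq_partialFractions (a := v 0 + v 1) (b := v 0 + v 2) (c := v 1 + v 2)
    (by positivity) (by positivity) (by positivity) (by positivity) (by positivity) (by positivity)
  simp only [f, hm0, hm1, hm2, hm3, hd0, hd1, hd2, hd3, abs_one, abs_two, one_mul, cons_val_zero,
    cons_val_one, cons_val_two, head_cons, tail_cons]
  linear_combination 2 * key
end

section
/- For x₀ < x₁ < x₂ all positive, the function f(x₀,x₁,x₂) = 1/((x₀+x₂)·x₁·x₂) is invariant for the Brun algorithm on the ordered cone: extended symmetrically to all orderings (f(x) = 1/((min+max)·med·max) where min, med, max are the ordered coordinates), it satisfies f(v) = Σ |det m| f(m v) summed over the three Brun matrices m which add the second-largest coordinate to the largest in each ordering sector. -/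
/-!
The Brun branches send `(a, b, c)` with `0 < a < b < c` to vectors whose sorted forms are
`(a, b, b+c)`, `(a, c, b+c)` and `(b, c, a+c)`. Since `brunDensity` is symmetric and equals
`g(x, y, z) = 1/((x+z)yz)` on sorted vectors, the functional equation is the partial-fraction
identity `g(a,b,c) = g(a,b,b+c) + g(a,c,b+c) + g(b,c,a+c)`.
-/

open Matrix

/-- The Brun density extended to all orderings:
`f(x) = 1/((min+max)·med·max)` where `min, med, max` are the sorted coordinates. -/
noncomputable def brunDensity (v : Fin 3 → ℝ) : ℝ :=
  let mn := min (v 0) (min (v 1) (v 2))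
  let mx := max (v 0) (max (v 1) (v 2))
  let md := v 0 + v 1 + v 2 - mn - mx
  1 / ((mn + mx) * md * mx)

noncomputable def brunConeDensity (a b c : ℝ) : ℝ :=
  1 / ((a + c) * b * c)

theorem brunDensity_of_le {x y z : ℝ} (hxy : x ≤ y) (hyz : y ≤ z) :
    brunDensity ![x, y, z] = brunConeDensity x y z := by
  simp only [brunDensity, brunConeDensity, cons_val_zero, cons_val_one, cons_val_two, head_cons,
    tail_cons, min_eq_left hyz, max_eq_right hyz, min_eq_left hxy, max_eq_right (hxy.trans hyz)]
  ring_nf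

theorem brunDensity_swap_left (x y z : ℝ) : brunDensity ![x, y, z] = brunDensity ![y, x, z] := by
  simp only [brunDensity, cons_val_zero, cons_val_one, cons_val_two, head_cons, tail_cons,
    min_left_comm x, max_left_comm x]
  ring_nf

theorem brunDensity_swap_right (x y z : ℝ) : brunDensity ![x, y, z] = brunDensity ![x, z, y] := by
  simp only [brunDensity, cons_val_zero, cons_val_one, cons_val_two, head_cons, tail_cons,
    min_comm y, max_comm y]
  ring_nf

theorem brunConeDensity_eq_add {x y z : ℝ} (hx : 0 < x) (hy : 0 < y) (hz : 0 < z) :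
    brunConeDensity x y z = brunConeDensity x y (y + z) + brunConeDensity x z (y + z)
      + brunConeDensity y z (x + z) := by
  simp only [brunConeDensity]
  field_simp
  ring

/-- On the sector `0 < x₀ < x₁ < x₂`, where `brunDensity x = 1/((x₀+x₂)x₁x₂)`,
the Brun density satisfies `f(v) = Σ |det m| f(m v)` over the three inverse
branches of the Brun algorithm, each adding the second-largest coordinate to
the largest one. -/
theorem brun_invariant_density :
    let M2 : Matrix (Fin 3) (Fin 3) ℝ := !![1, 0, 0; 0, 1, 0; 0, 1, 1]
    let M1 : Matrix (Fin 3) (Fin 3) ℝ := !![1, 0, 0; 0, 1, 1; 0, 0, 1]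
    let M0 : Matrix (Fin 3) (Fin 3) ℝ := !![1, 0, 1; 0, 1, 0; 0, 0, 1]
    ∀ v : Fin 3 → ℝ, 0 < v 0 → v 0 < v 1 → v 1 < v 2 →
      brunDensity v = 1 / ((v 0 + v 2) * v 1 * v 2) ∧
      brunDensity v
        = |M2.det| * brunDensity (M2.mulVec v)
        + |M1.det| * brunDensity (M1.mulVec v)
        + |M0.det| * brunDensity (M0.mulVec v) := by
  intro M2 M1 M0 v
  obtain ⟨a, b, c, rfl⟩ : ∃ a b c, v = ![a, b, c] := ⟨v 0, v 1, v 2, (FinVec.etaExpand_eq v).symm⟩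
  intro (ha : 0 < a) (hab : a < b) (hbc : b < c)
  have hb := ha.trans hab
  have hc := hb.trans hbc
  have hM2 : M2 *ᵥ ![a, b, c] = ![a, b, b + c] := by
    ext i; fin_cases i <;> simp [M2, mulVec, dotProduct, Fin.sum_univ_three]
  have hM1 : M1 *ᵥ ![a, b, c] = ![a, b + c, c] := by
    ext i; fin_cases i <;> simp [M1, mulVec, dotProduct, Fin.sum_univ_three]
  have hM0 : M0 *ᵥ ![a, b, c] = ![a + c, b, c] := by
    ext i; fin_cases i <;> simp [M0, mulVec, dotProduct, Fin.sum_univ_three]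
  obtain ⟨hdet2, hdet1, hdet0⟩ : M2.det = 1 ∧ M1.det = 1 ∧ M0.det = 1 := by
    simp [M2, M1, M0, det_fin_three]
  refine ⟨brunDensity_of_le hab.le hbc.le, ?_⟩
  rw [hM2, hM1, hM0, hdet2, hdet1, hdet0, abs_one, one_mul, one_mul, one_mul,
    brunDensity_swap_right a (b + c), brunDensity_swap_left (a + c), brunDensity_swap_right b (a + c),
    brunDensity_of_le hab.le hbc.le, brunDensity_of_le hab.le (by linarith),
    brunDensity_of_le (hab.trans hbc).le (by linarith), brunDensity_of_le hbc.le (by linarith)]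
  exact brunConeDensity_eq_add ha hb hc
end
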